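/- Let $K \subset \mathbb{R}^2$ be a compact convex body whose support function $h(\vartheta) = \sup_{y \in K} \langle (\cos\vartheta, \sin\vartheta), y \rangle$ is twice continuously differentiable with $h(\vartheta) + h''(\vartheta) > 0$ for all $\vartheta$. Fix $\vartheta_0 \in \mathbb{R}$ and let $i(\vartheta) = h(\vartheta) n_\vartheta - \big(\int_{\vartheta_0}^{\vartheta} h(\tau)\,d\tau - h'(\vartheta_0)\big) t_\vartheta$ be the left involute of $\partial K$ starting at $i(\vartheta_0)$. Then for every $y$ in the interior of $K$, the function $\vartheta \mapsto \|i(\vartheta) - y\|$ is strictly increasing on $[\vartheta_0, \infty)$. -/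

import Mathlib

open Real MeasureTheory

noncomputable def vec2 (a b : ℝ) : EuclideanSpace ℝ (Fin 2) :=
  (WithLp.equiv 2 (Fin 2 → ℝ)).symm ![a, b]

/-- The outer normal direction `n_ϑ = (cos ϑ, sin ϑ)`. -/
noncomputable def nvec (θ : ℝ) : EuclideanSpace ℝ (Fin 2) := vec2 (Real.cos θ) (Real.sin θ)

/-- The tangent direction `t_ϑ = (-sin ϑ, cos ϑ)`. -/
noncomputable def tvec (θ : ℝ) : EuclideanSpace ℝ (Fin 2) := vec2 (-Real.sin θ) (Real.cos θ)

/-!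
The involute is traced with velocity `i'(ϑ) = f(ϑ) n_ϑ`, where
`f(ϑ) = h'(ϑ) + ∫_{ϑ₀}^ϑ h - h'(ϑ₀)` vanishes at `ϑ₀` and has derivative `h + h'' > 0`, so `f > 0`
on `(ϑ₀, ∞)`. Since `⟨n_ϑ, i(ϑ)⟩ = h(ϑ)`, the squared distance to `y` has derivative
`2 f(ϑ) (h(ϑ) - ⟨n_ϑ, y⟩)`, and `⟨n_ϑ, y⟩ < h(ϑ)` for an interior point `y`.
-/

section InnerProductSpace

variable {E : Type*} [NormedAddCommGroup E] [InnerProductSpace ℝ E]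

theorem inner_lt_of_mem_interior {K : Set E} {u y : E} {c : ℝ} (hu : u ≠ 0)
    (hc : c ∈ upperBounds ((fun x => inner ℝ u x) '' K)) (hy : y ∈ interior K) :
    inner ℝ u y < c := by
  have hline : Continuous fun t : ℝ => y + t • u := by fun_prop
  have hev : ∀ᶠ t in nhdsWithin (0 : ℝ) (Set.Ioi 0), y + t • u ∈ K :=
    nhdsWithin_le_nhds <|
      (hline.tendsto' 0 y (by simp)).eventually (mem_interior_iff_mem_nhds.mp hy)
  obtain ⟨t, hyK, ht⟩ := (hev.and self_mem_nhdsWithin).exists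
  have hle : inner ℝ u (y + t • u) ≤ c := hc ⟨_, hyK, rfl⟩
  rw [inner_add_right, real_inner_smul_right, real_inner_self_eq_norm_sq] at hle
  have : 0 < t * ‖u‖ ^ 2 := mul_pos ht (by positivity)
  linarith

theorem hasDerivAt_norm_sub_sq {i : ℝ → E} {u y : E} {s b θ : ℝ}
    (hi : HasDerivAt i (s • u) θ) (hb : inner ℝ u (i θ) = b) :
    HasDerivAt (fun θ => ‖i θ - y‖ ^ 2) (2 * s * (b - inner ℝ u y)) θ := by
  have H := ((hi.sub_const y).inner ℝ (hi.sub_const y))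
  simp only [real_inner_self_eq_norm_sq] at H
  refine H.congr_deriv ?_
  rw [real_inner_comm (s • u), real_inner_smul_left, inner_sub_right, hb]
  ring

end InnerProductSpace

theorem vec2_eq_add (a b : ℝ) : vec2 a b = a • vec2 1 0 + b • vec2 0 1 := by
  ext j
  fin_cases j <;> simp [vec2]

theorem inner_vec2 (a b c d : ℝ) : inner ℝ (vec2 a b) (vec2 c d) = a * c + b * d := by
  simp [vec2, PiLp.inner_apply, Fin.sum_univ_two]
  ring

theorem hasDerivAt_vec2 {u v : ℝ → ℝ} {u' v' θ : ℝ} (hu : HasDerivAt u u' θ)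
    (hv : HasDerivAt v v' θ) : HasDerivAt (fun t => vec2 (u t) (v t)) (vec2 u' v') θ := by
  rw [funext fun t => vec2_eq_add (u t) (v t), vec2_eq_add u' v']
  exact (hu.smul_const _).add (hv.smul_const _)

theorem hasDerivAt_nvec (θ : ℝ) : HasDerivAt nvec (tvec θ) θ :=
  hasDerivAt_vec2 (hasDerivAt_cos θ) (hasDerivAt_sin θ)

theorem hasDerivAt_tvec (θ : ℝ) : HasDerivAt tvec (-nvec θ) θ := by
  have h := hasDerivAt_vec2 (hasDerivAt_sin θ).neg (hasDerivAt_cos θ)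
  rwa [show vec2 (-cos θ) (-sin θ) = -nvec θ by ext j; fin_cases j <;> rfl] at h

theorem inner_nvec_self (θ : ℝ) : inner ℝ (nvec θ) (nvec θ) = 1 := by
  rw [nvec, inner_vec2, ← sin_sq_add_cos_sq θ]
  ring

theorem inner_nvec_tvec (θ : ℝ) : inner ℝ (nvec θ) (tvec θ) = 0 := by
  rw [nvec, tvec, inner_vec2]
  ring

theorem nvec_ne_zero (θ : ℝ) : nvec θ ≠ 0 := by
  intro h0
  simpa [h0] using inner_nvec_self θ

theorem inner_nvec_smul_sub_smul_tvec (a b θ : ℝ) :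
    inner ℝ (nvec θ) (a • nvec θ - b • tvec θ) = a := by
  rw [inner_sub_right, real_inner_smul_right, real_inner_smul_right, inner_nvec_self,
    inner_nvec_tvec]
  ring

section Involute

variable {h : ℝ → ℝ} (θ₀ c : ℝ)

theorem hasDerivAt_involute (hd : Differentiable ℝ h) (θ : ℝ) :
    HasDerivAt (fun θ => h θ • nvec θ - ((∫ τ in θ₀..θ, h τ) - c) • tvec θ)
      ((deriv h θ + ((∫ τ in θ₀..θ, h τ) - c)) • nvec θ) θ := by
  have hint : HasDerivAt (fun θ => (∫ τ in θ₀..θ, h τ) - c) (h θ) θ :=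
    (hd.continuous.integral_hasStrictDerivAt θ₀ θ).hasDerivAt.sub_const c
  refine (((hd θ).hasDerivAt.smul (hasDerivAt_nvec θ)).sub
    (hint.smul (hasDerivAt_tvec θ))).congr_deriv ?_
  module

theorem strictMono_involute_speed (hsm : ContDiff ℝ 2 h)
    (hpos : ∀ θ, 0 < h θ + deriv (deriv h) θ) :
    StrictMono fun θ => deriv h θ + ((∫ τ in θ₀..θ, h τ) - c) := by
  have hd2 : Differentiable ℝ (deriv h) :=
    (hsm.iterate_deriv' 1 1).differentiable (by norm_num)
  refine strictMono_of_hasDerivAt_pos (fun θ => (hd2 θ).hasDerivAt.add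
    ((hsm.continuous.integral_hasStrictDerivAt θ₀ θ).hasDerivAt.sub_const c)) fun θ => ?_
  linarith [hpos θ]

end Involute

theorem stmt_10_general (K : Set (EuclideanSpace ℝ (Fin 2)))
    (h : ℝ → ℝ)
    (hsupp : ∀ θ : ℝ, IsLUB ((fun y => (inner ℝ (nvec θ) y : ℝ)) '' K) (h θ))
    (hsm : ContDiff ℝ 2 h) (hpos : ∀ θ, 0 < h θ + deriv (deriv h) θ)
    (θ₀ : ℝ) (i : ℝ → EuclideanSpace ℝ (Fin 2))
    (hi : ∀ θ, i θ = h θ • nvec θ - ((∫ τ in θ₀..θ, h τ) - deriv h θ₀) • tvec θ) :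
    ∀ y ∈ interior K, StrictMonoOn (fun θ => ‖i θ - y‖) (Set.Ici θ₀) := by
  intro y hy
  set f := fun θ => deriv h θ + ((∫ τ in θ₀..θ, h τ) - deriv h θ₀)
  have hf_pos : ∀ θ, θ₀ < θ → 0 < f θ := fun θ hθ => by
    simpa [f] using strictMono_involute_speed θ₀ (deriv h θ₀) hsm hpos hθ
  have hdist : ∀ θ, HasDerivAt (fun θ => ‖i θ - y‖ ^ 2)
      (2 * f θ * (h θ - inner ℝ (nvec θ) y)) θ := fun θ => by
    rw [funext hi]
    exact hasDerivAt_norm_sub_sq (hasDerivAt_involute θ₀ _ (hsm.differentiable two_ne_zero) θ)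
      (inner_nvec_smul_sub_smul_tvec _ _ θ)
  have hsq : StrictMonoOn (fun θ => ‖i θ - y‖ ^ 2) (Set.Ici θ₀) := by
    refine strictMonoOn_of_hasDerivWithinAt_pos (convex_Ici θ₀)
      (fun θ _ => (hdist θ).continuousAt.continuousWithinAt)
      (fun θ _ => (hdist θ).hasDerivWithinAt) fun θ hθ => ?_
    rw [interior_Ici] at hθ
    have hy_lt := inner_lt_of_mem_interior (nvec_ne_zero θ) (hsupp θ).1 hy
    have := mul_pos (hf_pos θ hθ) (sub_pos.mpr hy_lt)
    linarith
  exact fun a ha b hb hab =>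
    (pow_lt_pow_iff_left₀ (norm_nonneg _) (norm_nonneg _) two_ne_zero).mp (hsq ha hb hab)

/-- For every `y` in the interior of `K`, the distance
`ϑ ↦ ‖i(ϑ) - y‖` from `y` to the left involute is strictly increasing on `[ϑ₀, ∞)`. -/
theorem stmt_10 (K : Set (EuclideanSpace ℝ (Fin 2)))
    (hne : K.Nonempty) (hcp : IsCompact K) (hcv : Convex ℝ K)
    (h : ℝ → ℝ)
    (hsupp : ∀ θ : ℝ, IsLUB ((fun y => (inner ℝ (nvec θ) y : ℝ)) '' K) (h θ))
    (hsm : ContDiff ℝ 2 h) (hpos : ∀ θ, 0 < h θ + deriv (deriv h) θ)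
    (θ₀ : ℝ) (i : ℝ → EuclideanSpace ℝ (Fin 2))
    (hi : ∀ θ, i θ = h θ • nvec θ - ((∫ τ in θ₀..θ, h τ) - deriv h θ₀) • tvec θ) :
    ∀ y ∈ interior K, StrictMonoOn (fun θ => ‖i θ - y‖) (Set.Ici θ₀) :=
  stmt_10_general K h hsupp hsm hpos θ₀ i hi
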